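/- arXiv:1711.03149 — 2 statements merged into one kernel-verified Lean document; each statement's English description precedes it below -/
import Mathlib

section
/- (Theorem 4, adjusted likelihoods + Wasserstein barycenter: honest coverage.) For every β, M, σ > 0 and every γ ∈ (0,1) there exist L > 0 and N such that for all n ≥ N and all machine counts m ≥ 1, sup_{θ₀ ∈ H^β(M)} P( ‖θ̂ − θ₀‖₂ > L·r_γ ) ≤ γ. -/
/-!
Write `κᵢ = σ² i^{1+2β}`. Coordinatewise, `θ̂ᵢ − θ₀ᵢ` is the bias `−κᵢ θ₀ᵢ / (n + κᵢ)`
plus a centred Gaussian of variance `n σ² / (n + κᵢ)²`, independently of `m`; on `H^β(M)` the bias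
squared is at most `M² tᵢ²` and the variance at most `tᵢ²`, so
`E ‖θ̂ − θ₀‖² ≤ (M² + 1) Σ tᵢ²` uniformly over the hyperrectangle.

The credible radius is not small compared with `Σ tᵢ²`: by the Chernoff bound with the Laplace
transform `E exp (−λ W²) = (1 + 2λ)^{−1/2}` of a standard Gaussian, and
`∏ (1 + xᵢ) ≥ 1 + Σ xᵢ`, one gets `P(Σ tᵢ² Wᵢ² ≤ q)² · Σ tᵢ² ≤ e q`, hence
`(1 − γ)² Σ tᵢ² ≤ e r_γ²`. Markov's inequality then gives coverage with
`L² = e (M² + 1) / (γ (1 − γ)²)`, for every `n > 0`.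
-/

open MeasureTheory ProbabilityTheory Filter

/-- The hyperrectangle `H^β(M)` of `β`-regular signals in `ℓ²`, indexed so that
coordinate `i : ℕ` corresponds to the integer `i + 1`. -/
def hyperRect (β M : ℝ) : Set (ℕ → ℝ) :=
  {θ | (Summable fun i => (θ i) ^ 2) ∧
    ∀ i : ℕ, ((i : ℝ) + 1) ^ (1 + 2 * β) * (θ i) ^ 2 ≤ M ^ 2}

/-- The noise variables `(Z^j_i)` together with the posterior-sampling variables `(W_i)`
form an i.i.d. standard Gaussian family. -/
def iidStdGauss {Ω : Type*} [MeasurableSpace Ω] (P : Measure Ω)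
    (Z : ℕ → ℕ → Ω → ℝ) (W : ℕ → Ω → ℝ) : Prop :=
  iIndepFun
      (Sum.elim (fun p : ℕ × ℕ => Z p.1 p.2) W) P ∧
    ∀ a : (ℕ × ℕ) ⊕ ℕ,
      Measure.map (Sum.elim (fun p : ℕ × ℕ => Z p.1 p.2) W a) P = gaussianReal 0 1

/-- Local data: `Y^j_i = θ₀,ᵢ + sqrt(σ² m / n) Z^j_i`. -/
noncomputable def dataY (σ n : ℝ) (m : ℕ) (θ0 : ℕ → ℝ) {Ω : Type*}
    (Z : ℕ → ℕ → Ω → ℝ) (j i : ℕ) (ω : Ω) : ℝ :=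
  θ0 i + Real.sqrt (σ ^ 2 * m / n) * Z j i ω

/-- Method IV (likelihoods raised to the power `m`, Wasserstein barycenter aggregation):
aggregated posterior mean `θ̂ᵢ = (1/m) Σ_{j<m} n Y^j_i / (n + σ² i^{1+2β})`. -/
noncomputable def postMeanIV (σ β n : ℝ) (m : ℕ) (θ0 : ℕ → ℝ) {Ω : Type*}
    (Z : ℕ → ℕ → Ω → ℝ) (ω : Ω) (i : ℕ) : ℝ :=
  (1 / (m : ℝ)) * ∑ j ∈ Finset.range m,
    n * dataY σ n m θ0 Z j i ω / (n + σ ^ 2 * ((i : ℝ) + 1) ^ (1 + 2 * β))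

/-- Method IV: aggregated posterior coordinate variances `tᵢ² = σ²/(n + σ² i^{1+2β})`. -/
noncomputable def postVarIV (σ β n : ℝ) (i : ℕ) : ℝ :=
  σ ^ 2 / (n + σ ^ 2 * ((i : ℝ) + 1) ^ (1 + 2 * β))

open Real

lemma Finset.one_add_sum_le_prod_one_add {ι R : Type*} [CommSemiring R] [PartialOrder R]
    [IsOrderedRing R] (s : Finset ι) {f : ι → R} (hf : ∀ i ∈ s, 0 ≤ f i) :
    1 + ∑ i ∈ s, f i ≤ ∏ i ∈ s, (1 + f i) := by
  classical
  induction s using Finset.induction_on with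
  | empty => simp
  | insert j s hj ih =>
    rw [Finset.sum_insert hj, Finset.prod_insert hj]
    have hfj := hf j (Finset.mem_insert_self j s)
    have hs := ih fun i hi => hf i (Finset.mem_insert_of_mem hi)
    have hsum : 0 ≤ ∑ i ∈ s, f i :=
      Finset.sum_nonneg fun i hi => hf i (Finset.mem_insert_of_mem hi)
    calc 1 + (f j + ∑ i ∈ s, f i) ≤ 1 + (f j + ∑ i ∈ s, f i) + f j * ∑ i ∈ s, f i :=
          le_add_of_nonneg_right (mul_nonneg hfj hsum)
      _ = (1 + f j) * (1 + ∑ i ∈ s, f i) := by ring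
      _ ≤ (1 + f j) * ∏ i ∈ s, (1 + f i) :=
          mul_le_mul_of_nonneg_left hs (add_nonneg zero_le_one hfj)

lemma ae_summable_of_summable_integral_norm {α ι : Type*} [MeasurableSpace α] [Countable ι]
    {μ : Measure α} {f : ι → α → ℝ} (hf : ∀ i, Integrable (f i) μ)
    (hsum : Summable fun i => ∫ x, ‖f i x‖ ∂μ) :
    ∀ᵐ x ∂μ, Summable fun i => f i x := by
  have hfin : ∑' i, eLpNorm (f i) 1 μ ≠ ⊤ := by
    simp_rw [eLpNorm_one_eq_lintegral_enorm, ← ofReal_integral_norm_eq_lintegral_enorm (hf _)]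
    rw [← ENNReal.ofReal_tsum_of_nonneg (fun i => integral_nonneg fun x => norm_nonneg _) hsum]
    exact ENNReal.ofReal_ne_top
  filter_upwards [summable_norm_of_tsum_eLpNorm_ne_top le_rfl (fun i => (hf i).1) hfin]
    with x hx using hx.of_norm

lemma measure_lt_sqrt_tsum_sq_le {α ι : Type*} [MeasurableSpace α] [Countable ι] {μ : Measure α}
    {D : ι → α → ℝ} (hD : ∀ i, Integrable (fun x => D i x ^ 2) μ) {u : ι → ℝ}
    (hDu : ∀ i, ∫ x, D i x ^ 2 ∂μ ≤ u i) (hu : Summable u) {c : ℝ} (hc : 0 < c) :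
    μ {x | c < √(∑' i, D i x ^ 2)} ≤ ENNReal.ofReal ((∑' i, u i) / c ^ 2) := by
  have hmeas : ∀ i, AEMeasurable (fun x => ENNReal.ofReal (D i x ^ 2)) μ :=
    fun i => (hD i).aemeasurable.ennreal_ofReal
  have hsub : {x | c < √(∑' i, D i x ^ 2)}
      ⊆ {x | ENNReal.ofReal (c ^ 2) ≤ ∑' i, ENNReal.ofReal (D i x ^ 2)} := by
    intro x hx
    have hlt : c ^ 2 < ∑' i, D i x ^ 2 := (lt_sqrt hc.le).mp hx
    have hsum : Summable fun i => D i x ^ 2 := by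
      by_contra h
      rw [tsum_eq_zero_of_not_summable h] at hlt
      exact (sq_nonneg c).not_gt hlt
    rw [Set.mem_ofPred_eq, ← ENNReal.ofReal_tsum_of_nonneg (fun i => sq_nonneg _) hsum]
    exact ENNReal.ofReal_le_ofReal hlt.le
  have hlintegral : ∫⁻ x, ∑' i, ENNReal.ofReal (D i x ^ 2) ∂μ ≤ ENNReal.ofReal (∑' i, u i) := by
    rw [lintegral_tsum hmeas, ENNReal.ofReal_tsum_of_nonneg
      (fun i => (integral_nonneg fun x => sq_nonneg (D i x)).trans (hDu i)) hu]
    refine ENNReal.tsum_le_tsum fun i => ?_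
    rw [← ofReal_integral_eq_lintegral_ofReal (hD i) (ae_of_all _ fun x => sq_nonneg _)]
    exact ENNReal.ofReal_le_ofReal (hDu i)
  calc μ {x | c < √(∑' i, D i x ^ 2)}
      ≤ (∫⁻ x, ∑' i, ENNReal.ofReal (D i x ^ 2) ∂μ) / ENNReal.ofReal (c ^ 2) :=
        (measure_mono hsub).trans (meas_ge_le_lintegral_div (AEMeasurable.tsum hmeas)
          (by positivity) ENNReal.ofReal_ne_top)
    _ ≤ ENNReal.ofReal (∑' i, u i) / ENNReal.ofReal (c ^ 2) := by gcongr
    _ = ENNReal.ofReal ((∑' i, u i) / c ^ 2) := (ENNReal.ofReal_div_of_pos (by positivity)).symm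

lemma integral_exp_neg_mul_sq_gaussianReal {c : ℝ} (hc : -(1 / 2) < c) :
    ∫ x, exp (-c * x ^ 2) ∂gaussianReal 0 1 = (√(1 + 2 * c))⁻¹ := by
  rw [integral_gaussianReal_eq_integral_smul one_ne_zero]
  have hexp : ∀ x : ℝ, gaussianPDFReal 0 1 x • exp (-c * x ^ 2)
      = (√(2 * π))⁻¹ * exp (-(c + 1 / 2) * x ^ 2) := by
    intro x
    rw [gaussianPDFReal, smul_eq_mul, mul_assoc, ← exp_add]
    congr 2
    · simp
    · push_cast; ring
  simp_rw [hexp]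
  rw [integral_const_mul, integral_gaussian]
  have h1 : 0 < 1 + 2 * c := by linarith
  rw [show π / (c + 1 / 2) = 2 * π / (1 + 2 * c) by field_simp; ring, sqrt_div' _ h1.le]
  field_simp

section GaussianChaos

variable {Ω : Type*} [MeasurableSpace Ω] {P : Measure Ω} [IsProbabilityMeasure P]

lemma integral_sq_eq_variance_add_sq {X : Ω → ℝ} (hX : MemLp X 2 P) :
    ∫ ω, X ω ^ 2 ∂P = Var[X; P] + (∫ ω, X ω ∂P) ^ 2 := by
  rw [variance_eq_sub hX]
  simp only [Pi.pow_apply]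
  ring

lemma integral_sq_const_add_mul_sum_of_hasLaw_gaussianReal {ι : Type*} {X : ι → Ω → ℝ}
    {s : Finset ι} (hind : Set.Pairwise ↑s fun j k => X j ⟂ᵢ[P] X k)
    (hlaw : ∀ j, HasLaw (X j) (gaussianReal 0 1) P) (b c : ℝ) :
    ∫ ω, (b + c * ∑ j ∈ s, X j ω) ^ 2 ∂P = b ^ 2 + c ^ 2 * s.card := by
  have hL2 : ∀ j, MemLp (X j) 2 P := fun j => (hlaw j).hasGaussianLaw.memLp_two
  have hS : MemLp (fun ω => ∑ j ∈ s, X j ω) 2 P := memLp_finsetSum s fun j _ => hL2 j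
  have hmean : ∫ ω, ∑ j ∈ s, X j ω ∂P = 0 := by
    rw [integral_finsetSum s fun j _ => (hL2 j).integrable one_le_two]
    refine Finset.sum_eq_zero fun j _ => ?_
    rw [(hlaw j).integral_eq, integral_id_gaussianReal]
  have hvar : Var[fun ω => ∑ j ∈ s, X j ω; P] = s.card := by
    rw [← Finset.sum_fn, IndepFun.variance_sum (fun j _ => hL2 j) hind]
    simp [(hlaw _).variance_eq, variance_id_gaussianReal]
  have hY : MemLp (fun ω => b + c * ∑ j ∈ s, X j ω) 2 P := (memLp_const b).add (hS.const_mul c)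
  rw [integral_sq_eq_variance_add_sq hY,
    variance_const_add (hS.const_mul c).aestronglyMeasurable, variance_const_mul, hvar,
    integral_add (integrable_const b) ((hS.integrable one_le_two).const_mul c),
    integral_const_mul, hmean]
  simp
  ring

lemma measureReal_sum_mul_sq_le_le {ι : Type*} {W : ι → Ω → ℝ} (hind : iIndepFun W P)
    (hlaw : ∀ i, HasLaw (W i) (gaussianReal 0 1) P) (s : Finset ι) {a : ι → ℝ}
    (ha : ∀ i ∈ s, 0 ≤ a i) {t : ℝ} (ht : 0 ≤ t) (ε : ℝ) :
    P.real {ω | ∑ i ∈ s, a i * W i ω ^ 2 ≤ ε}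
      ≤ exp (t * ε) * (√(1 + 2 * t * ∑ i ∈ s, a i))⁻¹ := by
  set X : ι → Ω → ℝ := fun i ω => a i * W i ω ^ 2
  have hXind : iIndepFun X P := hind.comp (fun i x => a i * x ^ 2) fun i => by fun_prop
  have hXmeas : ∀ i, AEMeasurable (X i) P := fun i => by
    have := (hlaw i).aemeasurable
    fun_prop
  have hsum_nonneg : ∀ ω, 0 ≤ ∑ i ∈ s, X i ω := fun ω =>
    Finset.sum_nonneg fun i hi => mul_nonneg (ha i hi) (sq_nonneg _)
  have hint : Integrable (fun ω => exp (-t * (∑ i ∈ s, X i) ω)) P := by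
    refine (integrable_const (1 : ℝ)).mono' ?_ (ae_of_all _ fun ω => ?_)
    · exact ((Finset.aemeasurable_sum s fun i _ => hXmeas i).const_mul (-t)).exp
        |>.aestronglyMeasurable
    · rw [Real.norm_eq_abs, abs_of_pos (exp_pos _), exp_le_one_iff, Finset.sum_apply]
      nlinarith [hsum_nonneg ω]
  have hmgf : ∀ i ∈ s, mgf (X i) P (-t) = (√(1 + 2 * t * a i))⁻¹ := fun i hi => by
    have h := (hlaw i).integral_comp (f := fun x => exp (-(t * a i) * x ^ 2)) (by fun_prop)
    rw [integral_exp_neg_mul_sq_gaussianReal (by have := ha i hi; nlinarith)] at h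
    rw [mul_assoc, ← h, mgf]
    congr 1 with ω
    simp only [X, Function.comp_apply]
    ring_nf
  have chernoff := measure_le_le_exp_mul_mgf (X := ∑ i ∈ s, X i) ε (neg_nonpos.mpr ht) hint
  rw [hXind.mgf_sum₀ hXmeas, neg_neg, Finset.prod_congr rfl hmgf] at chernoff
  simp only [Finset.sum_apply] at chernoff
  refine chernoff.trans (mul_le_mul_of_nonneg_left ?_ (exp_pos _).le)
  have hprod := s.one_add_sum_le_prod_one_add (f := fun i => 2 * t * a i)
    fun i hi => by have := ha i hi; positivity
  rw [Finset.prod_inv_distrib, ← Real.sqrt_prod _ fun i hi => by have := ha i hi; positivity,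
    Finset.mul_sum]
  have : 0 ≤ ∑ i ∈ s, 2 * t * a i := Finset.sum_nonneg fun i hi => by
    have := ha i hi; positivity
  gcongr

lemma measureReal_sum_mul_sq_le_sq_mul_sum_le {ι : Type*} {W : ι → Ω → ℝ}
    (hind : iIndepFun W P) (hlaw : ∀ i, HasLaw (W i) (gaussianReal 0 1) P) (s : Finset ι)
    {a : ι → ℝ} (ha : ∀ i ∈ s, 0 ≤ a i) {q : ℝ} (hq : 0 < q) :
    P.real {ω | ∑ i ∈ s, a i * W i ω ^ 2 ≤ q} ^ 2 * ∑ i ∈ s, a i ≤ exp 1 * q := by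
  set p := P.real {ω | ∑ i ∈ s, a i * W i ω ^ 2 ≤ q}
  set A := ∑ i ∈ s, a i
  have hA : 0 ≤ A := Finset.sum_nonneg ha
  have hs : 0 < √(1 + A / q) := by positivity
  have hps : p * √(1 + A / q) ≤ exp (1 / 2) := by
    have h := measureReal_sum_mul_sq_le_le hind hlaw s ha (t := 1 / (2 * q)) (by positivity) q
    rwa [show 1 / (2 * q) * q = 1 / 2 by field_simp, show 2 * (1 / (2 * q)) * A = A / q by ring,
      ← div_eq_mul_inv, le_div_iff₀ hs] at h
  have hsq : p ^ 2 * (1 + A / q) ≤ exp 1 := by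
    have h := pow_le_pow_left₀ (mul_nonneg measureReal_nonneg hs.le) hps 2
    rwa [mul_pow, sq_sqrt (by positivity), ← exp_nat_mul, show ((2 : ℕ) : ℝ) * (1 / 2) = 1 by
      norm_num] at h
  rw [mul_add, mul_one, ← mul_div_assoc] at hsq
  exact (div_le_iff₀ hq).mp (by nlinarith [sq_nonneg p])

lemma measureReal_tsum_mul_sq_le_sq_mul_tsum_le {W : ℕ → Ω → ℝ} (hind : iIndepFun W P)
    (hlaw : ∀ i, HasLaw (W i) (gaussianReal 0 1) P) {a : ℕ → ℝ} (ha : ∀ i, 0 ≤ a i)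
    (ha_sum : Summable a) {q : ℝ} (hq : 0 < q) :
    P.real {ω | ∑' i, a i * W i ω ^ 2 ≤ q} ^ 2 * ∑' i, a i ≤ exp 1 * q := by
  set p := P.real {ω | ∑' i, a i * W i ω ^ 2 ≤ q}
  have hW_sq : ∀ i, ∫ ω, W i ω ^ 2 ∂P = 1 := fun i => by
    rw [integral_sq_eq_variance_add_sq (hlaw i).hasGaussianLaw.memLp_two, (hlaw i).variance_eq,
      (hlaw i).integral_eq, variance_id_gaussianReal, integral_id_gaussianReal]
    simp
  -- The event also contains the `ω` where the series diverges (`∑' = 0`); they form a null set.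
  have hsummable : ∀ᵐ ω ∂P, Summable fun i => a i * W i ω ^ 2 := by
    refine ae_summable_of_summable_integral_norm
      (fun i => ((hlaw i).hasGaussianLaw.memLp_two.integrable_sq).const_mul (a i)) ?_
    refine ha_sum.congr fun i => ?_
    simp_rw [norm_mul, norm_pow, Real.norm_eq_abs, sq_abs, abs_of_nonneg (ha i)]
    rw [integral_const_mul, hW_sq, mul_one]
  have hpartial : ∀ K, p ≤ P.real {ω | ∑ i ∈ Finset.range K, a i * W i ω ^ 2 ≤ q} := by
    intro K
    refine ENNReal.toReal_mono (measure_ne_top _ _) (measure_mono_ae ?_)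
    filter_upwards [hsummable] with ω hω hle
    exact (hω.sum_le_tsum _ fun i _ => mul_nonneg (ha i) (sq_nonneg _)).trans hle
  rw [← tsum_mul_left]
  refine Real.tsum_le_of_sum_range_le (fun i => mul_nonneg (sq_nonneg p) (ha i)) fun K => ?_
  rw [← Finset.mul_sum]
  refine le_trans ?_ (measureReal_sum_mul_sq_le_sq_mul_sum_le hind hlaw (Finset.range K)
    (fun i _ => ha i) hq)
  gcongr
  exacts [Finset.sum_nonneg fun i _ => ha i, hpartial K]

end GaussianChaos

lemma postVarIV_nonneg (σ β : ℝ) {n : ℝ} (hn : 0 ≤ n) (i : ℕ) : 0 ≤ postVarIV σ β n i := by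
  unfold postVarIV
  positivity

lemma summable_postVarIV (σ : ℝ) {β n : ℝ} (hβ : 0 < β) (hn : 0 < n) :
    Summable (postVarIV σ β n) := by
  have hp : Summable fun i : ℕ => 1 / |(i : ℝ) + 1| ^ (1 + 2 * β) :=
    (Real.summable_one_div_nat_add_rpow 1 _).mpr (by linarith)
  refine hp.of_nonneg_of_le (postVarIV_nonneg σ β hn.le) fun i => ?_
  have hx : 0 < ((i : ℝ) + 1) ^ (1 + 2 * β) := by positivity
  rw [abs_of_pos (by positivity), postVarIV, div_le_div_iff₀ (by positivity) hx]
  linarith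

lemma postMeanIV_sub_eq {Ω : Type*} (σ β : ℝ) (θ0 : ℕ → ℝ) (Z : ℕ → ℕ → Ω → ℝ) (ω : Ω) {n : ℝ}
    (hn : 0 < n) {m : ℕ} (hm : m ≠ 0) (i : ℕ) :
    postMeanIV σ β n m θ0 Z ω i - θ0 i =
      -(σ ^ 2 * ((i : ℝ) + 1) ^ (1 + 2 * β) * θ0 i / (n + σ ^ 2 * ((i : ℝ) + 1) ^ (1 + 2 * β)))
      + n * √(σ ^ 2 * m / n) / (m * (n + σ ^ 2 * ((i : ℝ) + 1) ^ (1 + 2 * β)))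
        * ∑ j ∈ Finset.range m, Z j i ω := by
  simp only [postMeanIV, dataY, mul_add, add_div, Finset.sum_add_distrib, Finset.sum_const,
    Finset.card_range, nsmul_eq_mul, ← Finset.sum_div, ← Finset.mul_sum]
  field_simp
  ring

section MethodIV

variable {Ω : Type*} [MeasurableSpace Ω] {P : Measure Ω} {Z : ℕ → ℕ → Ω → ℝ} {W : ℕ → Ω → ℝ}

lemma iidStdGauss.iIndepFun_W (h : iidStdGauss P Z W) : iIndepFun W P :=
  (h.1.precomp Sum.inr_injective :)

lemma iidStdGauss.iIndepFun_Z (h : iidStdGauss P Z W) (i : ℕ) :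
    iIndepFun (fun j => Z j i) P :=
  (h.1.precomp (g := fun j => Sum.inl (j, i)) fun j k hjk => by simpa using hjk :)

lemma iidStdGauss.hasLaw (h : iidStdGauss P Z W) (a : (ℕ × ℕ) ⊕ ℕ) :
    HasLaw (Sum.elim (fun p : ℕ × ℕ => Z p.1 p.2) W a) (gaussianReal 0 1) P :=
  ⟨.of_map_ne_zero (by rw [h.2 a]; exact IsProbabilityMeasure.ne_zero _), h.2 a⟩

lemma iidStdGauss.hasLaw_W (h : iidStdGauss P Z W) (i : ℕ) :
    HasLaw (W i) (gaussianReal 0 1) P :=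
  h.hasLaw (.inr i)

lemma iidStdGauss.hasLaw_Z (h : iidStdGauss P Z W) (j i : ℕ) :
    HasLaw (Z j i) (gaussianReal 0 1) P :=
  h.hasLaw (.inl (j, i))

lemma integral_sq_postMeanIV_sub_le [IsProbabilityMeasure P] (h : iidStdGauss P Z W)
    {β M σ n : ℝ} (hn : 0 < n) {m : ℕ} (hm : m ≠ 0) {θ0 : ℕ → ℝ} (hθ0 : θ0 ∈ hyperRect β M)
    (i : ℕ) :
    ∫ ω, (postMeanIV σ β n m θ0 Z ω i - θ0 i) ^ 2 ∂P ≤ (M ^ 2 + 1) * postVarIV σ β n i := by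
  simp_rw [postMeanIV_sub_eq σ β θ0 Z _ hn hm i]
  rw [integral_sq_const_add_mul_sum_of_hasLaw_gaussianReal
    (fun j _ k _ hjk => (h.iIndepFun_Z i).indepFun hjk) (fun j => h.hasLaw_Z j i),
    Finset.card_range, postVarIV]
  set x := ((i : ℝ) + 1) ^ (1 + 2 * β)
  have hx : 0 ≤ x := by positivity
  have hθ : x * θ0 i ^ 2 ≤ M ^ 2 := hθ0.2 i
  have hD : 0 < n + σ ^ 2 * x := by positivity
  have hbias :
      (-(σ ^ 2 * x * θ0 i / (n + σ ^ 2 * x))) ^ 2 ≤ M ^ 2 * (σ ^ 2 / (n + σ ^ 2 * x)) := by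
    rw [neg_sq, div_pow, div_le_iff₀ (by positivity)]
    calc (σ ^ 2 * x * θ0 i) ^ 2 = σ ^ 2 * x * (σ ^ 2 * (x * θ0 i ^ 2)) := by ring
      _ ≤ (n + σ ^ 2 * x) * (σ ^ 2 * M ^ 2) := by
          gcongr
          linarith
      _ = M ^ 2 * (σ ^ 2 / (n + σ ^ 2 * x)) * (n + σ ^ 2 * x) ^ 2 := by
          field_simp
  have hvar : (n * √(σ ^ 2 * m / n) / (m * (n + σ ^ 2 * x))) ^ 2 * m
      ≤ σ ^ 2 / (n + σ ^ 2 * x) := by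
    rw [div_pow, mul_pow, sq_sqrt (by positivity), mul_pow]
    calc n ^ 2 * (σ ^ 2 * m / n) / (m ^ 2 * (n + σ ^ 2 * x) ^ 2) * m
        = σ ^ 2 / (n + σ ^ 2 * x) * (n / (n + σ ^ 2 * x)) := by
          field_simp
      _ ≤ σ ^ 2 / (n + σ ^ 2 * x) * 1 := by
          gcongr
          rw [div_le_one hD]
          nlinarith
      _ = σ ^ 2 / (n + σ ^ 2 * x) := mul_one _
  linarith

lemma memLp_postMeanIV_sub [IsProbabilityMeasure P] (h : iidStdGauss P Z W) (σ β : ℝ) {n : ℝ}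
    (hn : 0 < n) {m : ℕ} (hm : m ≠ 0) (θ0 : ℕ → ℝ) (i : ℕ) :
    MemLp (fun ω => postMeanIV σ β n m θ0 Z ω i - θ0 i) 2 P := by
  have hL2 : ∀ j, MemLp (Z j i) 2 P := fun j => (h.hasLaw_Z j i).hasGaussianLaw.memLp_two
  have hS : MemLp (fun ω => ∑ j ∈ Finset.range m, Z j i ω) 2 P :=
    memLp_finsetSum _ fun j _ => hL2 j
  rw [funext fun ω => postMeanIV_sub_eq σ β θ0 Z ω hn hm i]
  exact MemLp.add (memLp_const _) (hS.const_mul _)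

end MethodIV

theorem adjusted_likelihood_barycenter_coverage_general
    {Ω : Type*} [MeasurableSpace Ω] (P : Measure Ω) [IsProbabilityMeasure P]
    (Z : ℕ → ℕ → Ω → ℝ) (W : ℕ → Ω → ℝ)
    (hZW : iidStdGauss P Z W)
    (β M σ : ℝ) (hβ : 0 < β)
    (γ : ℝ) (hγ0 : 0 < γ) (hγ1 : γ < 1) :
    ∃ L : ℝ, 0 < L ∧ ∃ N : ℝ, ∀ n : ℝ, N ≤ n → ∀ m : ℕ, 1 ≤ m →
      ∀ θ0 ∈ hyperRect β M,
        ∀ rγ : ℝ, 0 < rγ →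
          P {ω : Ω | ∑' i : ℕ, postVarIV σ β n i * (W i ω) ^ 2 ≤ rγ ^ 2}
              = ENNReal.ofReal (1 - γ) →
          P {ω : Ω |
              Real.sqrt (∑' i : ℕ,
                  (postMeanIV σ β n m θ0 Z ω i - θ0 i) ^ 2) > L * rγ}
            ≤ ENNReal.ofReal γ := by
  refine ⟨√(exp 1 * (M ^ 2 + 1) / (γ * (1 - γ) ^ 2)), by positivity, 1,
    fun n hn m hm θ0 hθ0 r hr hcred => ?_⟩
  have hn0 : 0 < n := by linarith
  have hm0 : m ≠ 0 := by omega
  have hsum := summable_postVarIV σ hβ hn0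
  have hradius : (1 - γ) ^ 2 * ∑' i, postVarIV σ β n i ≤ exp 1 * r ^ 2 := by
    have h := measureReal_tsum_mul_sq_le_sq_mul_tsum_le hZW.iIndepFun_W hZW.hasLaw_W
      (postVarIV_nonneg σ β hn0.le) hsum (q := r ^ 2) (by positivity)
    rwa [measureReal_def, hcred, ENNReal.toReal_ofReal (by linarith)] at h
  refine (measure_lt_sqrt_tsum_sq_le
    (fun i => (memLp_postMeanIV_sub hZW σ β hn0 hm0 θ0 i).integrable_sq)
    (integral_sq_postMeanIV_sub_le hZW hn0 hm0 hθ0) (hsum.mul_left _) (by positivity)).trans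
    (ENNReal.ofReal_le_ofReal ?_)
  rw [tsum_mul_left, mul_pow, sq_sqrt (by positivity), div_le_iff₀ (by positivity)]
  calc (M ^ 2 + 1) * ∑' i, postVarIV σ β n i
      ≤ (M ^ 2 + 1) * (exp 1 * r ^ 2 / (1 - γ) ^ 2) := by
        gcongr
        rwa [le_div_iff₀ (by positivity), mul_comm]
    _ = γ * (exp 1 * (M ^ 2 + 1) / (γ * (1 - γ) ^ 2) * r ^ 2) := by
        field_simp

/-- Theorem 4 (adjusted likelihoods + Wasserstein barycenter), coverage part: for every
`β, M, σ > 0` and every `γ ∈ (0,1)` there exist `L > 0` and `N` such that for all `n ≥ N`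
and all machine counts `m ≥ 1`, `sup_{θ₀ ∈ H^β(M)} P(‖θ̂ − θ₀‖₂ > L r_γ) ≤ γ`, where
`r_γ > 0` is the deterministic credible radius with `P(Σᵢ tᵢ² Wᵢ² ≤ r_γ²) = 1 − γ`. -/
theorem adjusted_likelihood_barycenter_coverage
    {Ω : Type*} [MeasurableSpace Ω] (P : Measure Ω) [IsProbabilityMeasure P]
    (Z : ℕ → ℕ → Ω → ℝ) (W : ℕ → Ω → ℝ)
    (hZW : iidStdGauss P Z W)
    (β M σ : ℝ) (hβ : 0 < β) (hM : 0 < M) (hσ : 0 < σ)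
    (γ : ℝ) (hγ0 : 0 < γ) (hγ1 : γ < 1) :
    ∃ L : ℝ, 0 < L ∧ ∃ N : ℝ, ∀ n : ℝ, N ≤ n → ∀ m : ℕ, 1 ≤ m →
      ∀ θ0 ∈ hyperRect β M,
        ∀ rγ : ℝ, 0 < rγ →
          P {ω : Ω | ∑' i : ℕ, postVarIV σ β n i * (W i ω) ^ 2 ≤ rγ ^ 2}
              = ENNReal.ofReal (1 - γ) →
          P {ω : Ω |
              Real.sqrt (∑' i : ℕ,
                  (postMeanIV σ β n m θ0 Z ω i - θ0 i) ^ 2) > L * rγ}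
            ≤ ENNReal.ofReal γ :=
  adjusted_likelihood_barycenter_coverage_general P Z W hZW β M σ hβ γ hγ0 hγ1
end

section
/- (Uniform squared-bias bound over a hyperrectangle for the global-sample-size kernel, used in Theorem 2.) For every σ, β, M > 0 there exist C > 0 and N such that for all n ≥ N and all θ ∈ H^β(M), Σ_{i=1}^∞ σ⁴·i^{2+4β}·θᵢ²/(n + σ²·i^{1+2β})² ≤ C·M²·n^{-2β/(1+2β)}. -/
open Real Set

lemma sum_range_rpow_neg_le {p x₀ : ℝ} (hp : 1 < p) (hx₀ : 0 < x₀) (K : ℕ) :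
    ∑ i ∈ Finset.range K, (x₀ + (i + 1 : ℕ)) ^ (-p) ≤ x₀ ^ (1 - p) / (p - 1) := by
  have hanti : AntitoneOn (fun x : ℝ => x ^ (-p)) (Icc x₀ (x₀ + K)) :=
    fun a ha b _ hab => rpow_le_rpow_of_nonpos (hx₀.trans_le ha.1) hab (by linarith)
  have hzero : (0 : ℝ) ∉ uIcc x₀ (x₀ + K) := by
    rw [uIcc_of_le (le_add_of_nonneg_right K.cast_nonneg)]
    exact fun h => hx₀.not_ge h.1
  calc ∑ i ∈ Finset.range K, (x₀ + (i + 1 : ℕ)) ^ (-p)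
      ≤ ∫ x in x₀..x₀ + K, x ^ (-p) := hanti.sum_le_integral
    _ = (x₀ ^ (1 - p) - (x₀ + K) ^ (1 - p)) / (p - 1) := by
      rw [integral_rpow (Or.inr ⟨by linarith, hzero⟩), neg_add_eq_sub, ← neg_sub p 1, div_neg,
        ← neg_div, neg_sub]
    _ ≤ x₀ ^ (1 - p) / (p - 1) := by
      gcongr
      exact sub_le_self _ (by positivity)

lemma summable_add_one_rpow_inv {p : ℝ} (hp : 1 < p) :
    Summable fun i : ℕ => (((i : ℝ) + 1) ^ p)⁻¹ := by
  have := (summable_nat_add_iff 1).mpr (Real.summable_nat_rpow_inv.mpr hp)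
  exact_mod_cast this

lemma tsum_min_rpow_inv_le {p s : ℝ} (hp : 1 < p) (hs₀ : 0 < s) (hs₁ : s ≤ 1) :
    ∑' i : ℕ, min (((i : ℝ) + 1) ^ p)⁻¹ (s ^ 2 * ((i : ℝ) + 1) ^ p)
      ≤ (2 ^ (1 + p) + 1 / (p - 1)) * s ^ (1 - p⁻¹) := by
  set g : ℕ → ℝ := fun i => min (((i : ℝ) + 1) ^ p)⁻¹ (s ^ 2 * ((i : ℝ) + 1) ^ p)
  have hg_nonneg (i : ℕ) : 0 ≤ g i := by positivity
  have hg : Summable g :=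
    .of_nonneg_of_le hg_nonneg (fun i => min_le_left _ _) (summable_add_one_rpow_inv hp)
  -- the two bounds on `g` cross over at `t`, where `s ^ 2 * t ^ p = (t ^ p)⁻¹`
  set t := s ^ (-p⁻¹)
  have ht : 1 ≤ t :=
    one_le_rpow_of_pos_of_le_one_of_nonpos hs₀ hs₁ (neg_nonpos.mpr (by positivity))
  have ht_rpow (r : ℝ) : t ^ r = s ^ (-(p⁻¹ * r)) := by rw [← rpow_mul hs₀.le]; ring_nf
  set m := ⌈t⌉₊
  have hm_ge : t ≤ m := Nat.le_ceil t
  have hm_le : (m : ℝ) ≤ 2 * t := by linarith [Nat.ceil_lt_add_one (zero_le_one.trans ht)]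
  have hm_pos : (0 : ℝ) < m := by linarith
  have head : ∑ i ∈ Finset.range m, g i ≤ 2 ^ (1 + p) * s ^ (1 - p⁻¹) := by
    calc ∑ i ∈ Finset.range m, g i ≤ ∑ i ∈ Finset.range m, s ^ 2 * (m : ℝ) ^ p := by
          refine Finset.sum_le_sum fun i hi => (min_le_right _ _).trans ?_
          have : (i : ℝ) + 1 ≤ m := by exact_mod_cast Finset.mem_range.mp hi
          gcongr
      _ = s ^ 2 * (m : ℝ) ^ (1 + p) := by
          rw [Finset.sum_const, Finset.card_range, nsmul_eq_mul, rpow_add hm_pos, rpow_one]; ring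
      _ ≤ s ^ 2 * (2 * t) ^ (1 + p) := by gcongr
      _ = 2 ^ (1 + p) * s ^ (1 - p⁻¹) := by
          rw [mul_rpow zero_le_two (by positivity), ht_rpow, mul_left_comm, ← rpow_natCast,
            ← rpow_add hs₀]
          congr 2
          field_simp
          push_cast
          ring
  have tail : ∑' i, g (i + m) ≤ s ^ (1 - p⁻¹) / (p - 1) := by
    refine Real.tsum_le_of_sum_range_le (fun i => hg_nonneg _) fun K => ?_
    calc ∑ i ∈ Finset.range K, g (i + m)
        ≤ ∑ i ∈ Finset.range K, ((m : ℝ) + (i + 1 : ℕ)) ^ (-p) := by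
          refine Finset.sum_le_sum fun i _ => (min_le_left _ _).trans_eq ?_
          rw [← rpow_neg (by positivity)]
          push_cast
          ring_nf
      _ ≤ (m : ℝ) ^ (1 - p) / (p - 1) := sum_range_rpow_neg_le hp hm_pos K
      _ ≤ t ^ (1 - p) / (p - 1) := by
          gcongr ?_ / _
          exact rpow_le_rpow_of_nonpos (by positivity) hm_ge (by linarith)
      _ = s ^ (1 - p⁻¹) / (p - 1) := by
          rw [ht_rpow]
          congr 2
          field_simp
          ring
  calc ∑' i, g i = ∑ i ∈ Finset.range m, g i + ∑' i, g (i + m) := (hg.sum_add_tsum_nat_add m).symm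
    _ ≤ 2 ^ (1 + p) * s ^ (1 - p⁻¹) + s ^ (1 - p⁻¹) / (p - 1) := add_le_add head tail
    _ = (2 ^ (1 + p) + 1 / (p - 1)) * s ^ (1 - p⁻¹) := by ring

lemma mul_sq_div_add_sq_le_min {n c y θ M : ℝ} (hn : 0 < n) (hc : 0 ≤ c) (hy : 0 < y)
    (hθ : y * θ ^ 2 ≤ M ^ 2) :
    (c * y) ^ 2 * θ ^ 2 / (n + c * y) ^ 2 ≤ M ^ 2 * min y⁻¹ ((c / n) ^ 2 * y) := by
  have hcy : 0 ≤ c * y := by positivity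
  rw [mul_min_of_nonneg _ _ (sq_nonneg M)]
  refine le_min ?_ ?_
  · calc (c * y) ^ 2 * θ ^ 2 / (n + c * y) ^ 2 ≤ θ ^ 2 := by
          rw [div_le_iff₀ (by positivity)]
          have : (c * y) ^ 2 ≤ (n + c * y) ^ 2 := by gcongr; linarith
          nlinarith [sq_nonneg θ]
      _ ≤ M ^ 2 * y⁻¹ := by rw [← div_eq_mul_inv, le_div_iff₀ hy]; linarith
  · calc (c * y) ^ 2 * θ ^ 2 / (n + c * y) ^ 2 ≤ (c * y) ^ 2 * θ ^ 2 / n ^ 2 := by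
          gcongr; linarith
      _ = (c / n) ^ 2 * y * (y * θ ^ 2) := by field_simp
      _ ≤ M ^ 2 * ((c / n) ^ 2 * y) := by rw [mul_comm (M ^ 2)]; gcongr

theorem uniform_squared_bias_global_kernel_general
    (σ β M : ℝ) (hσ : 0 < σ) (hβ : 0 < β) :
    ∃ C N : ℝ, 0 < C ∧
      ∀ n : ℝ, N ≤ n → ∀ θ ∈ hyperRect β M,
        (∑' i : ℕ, σ ^ 4 * ((i : ℝ) + 1) ^ (2 + 4 * β) * (θ i) ^ 2
            / (n + σ ^ 2 * ((i : ℝ) + 1) ^ (1 + 2 * β)) ^ 2)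
          ≤ C * M ^ 2 * n ^ (-(2 * β / (1 + 2 * β))) := by
  set p := 1 + 2 * β
  have hp : 1 < p := by linarith
  refine ⟨(σ ^ 2) ^ (2 * β / p) * (2 ^ (1 + p) + 1 / (p - 1)), σ ^ 2, by positivity,
    fun n hn θ hθ => ?_⟩
  have hn₀ : 0 < n := (pow_pos hσ 2).trans_le hn
  set g : ℕ → ℝ := fun i => min (((i : ℝ) + 1) ^ p)⁻¹ ((σ ^ 2 / n) ^ 2 * ((i : ℝ) + 1) ^ p)
  have hg : Summable g :=
    .of_nonneg_of_le (fun i => by positivity) (fun i => min_le_left _ _)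
      (summable_add_one_rpow_inv hp)
  have hterm (i : ℕ) : σ ^ 4 * ((i : ℝ) + 1) ^ (2 + 4 * β) * (θ i) ^ 2
      / (n + σ ^ 2 * ((i : ℝ) + 1) ^ p) ^ 2 ≤ M ^ 2 * g i := by
    have hsq : ((i : ℝ) + 1) ^ (2 + 4 * β) = (((i : ℝ) + 1) ^ p) ^ 2 := by
      rw [← rpow_mul_natCast (by positivity)]; congr 1; push_cast; ring
    rw [hsq, show σ ^ 4 = (σ ^ 2) ^ 2 by ring, ← mul_pow]
    exact mul_sq_div_add_sq_le_min hn₀ (sq_nonneg σ) (by positivity) (hθ.2 i)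
  have hsummable : Summable fun i : ℕ => σ ^ 4 * ((i : ℝ) + 1) ^ (2 + 4 * β) * (θ i) ^ 2
      / (n + σ ^ 2 * ((i : ℝ) + 1) ^ p) ^ 2 :=
    .of_nonneg_of_le (fun i => by positivity) hterm (hg.mul_left _)
  have hs₁ : σ ^ 2 / n ≤ 1 := (div_le_one hn₀).mpr hn
  have hexp : 1 - p⁻¹ = 2 * β / p := by field_simp; ring
  calc _ ≤ ∑' i, M ^ 2 * g i := hsummable.tsum_le_tsum hterm (hg.mul_left _)
    _ = M ^ 2 * ∑' i, g i := tsum_mul_left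
    _ ≤ M ^ 2 * ((2 ^ (1 + p) + 1 / (p - 1)) * (σ ^ 2 / n) ^ (1 - p⁻¹)) := by
        gcongr
        exact tsum_min_rpow_inv_le hp (by positivity) hs₁
    _ = _ := by
        rw [hexp, div_rpow (by positivity) hn₀.le, rpow_neg hn₀.le]
        ring

/-- Uniform squared-bias bound over a hyperrectangle for the global-sample-size kernel
(used in Theorem 2): for every `σ, β, M > 0` there exist `C > 0` and `N` such that for all
`n ≥ N` and all `θ ∈ H^β(M)`,
`Σᵢ σ⁴ i^{2+4β} θᵢ²/(n + σ² i^{1+2β})² ≤ C M² n^{-2β/(1+2β)}`. -/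
theorem uniform_squared_bias_global_kernel
    (σ β M : ℝ) (hσ : 0 < σ) (hβ : 0 < β) (hM : 0 < M) :
    ∃ C N : ℝ, 0 < C ∧
      ∀ n : ℝ, N ≤ n → ∀ θ ∈ hyperRect β M,
        (∑' i : ℕ, σ ^ 4 * ((i : ℝ) + 1) ^ (2 + 4 * β) * (θ i) ^ 2
            / (n + σ ^ 2 * ((i : ℝ) + 1) ^ (1 + 2 * β)) ^ 2)
          ≤ C * M ^ 2 * n ^ (-(2 * β / (1 + 2 * β))) :=
  uniform_squared_bias_global_kernel_general σ β M hσ hβ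
end
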